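/- Let 𝒢 be a set of differentiable bijections of ℝⁿ whose Fréchet derivative is invertible at every point, and let q : ℝⁿ → ℝ be positive, differentiable, and 𝒢-invariant (q ∘ G = q for all G ∈ 𝒢). Let M ⊆ ℝⁿ be such that every x ∈ ℝⁿ can be written as x = G(m) for some G ∈ 𝒢 and m ∈ M. Let s : ℝⁿ → ℝⁿ be (𝒢, ∇⁻¹)-equivariant, meaning (DG(x))*(s(G(x))) = s(x) for all G ∈ 𝒢 and all x. If s(m) = ∇ log q(m) for every m ∈ M, then s(x) = ∇ log q(x) for every x ∈ ℝⁿ (the paper's Theorem 2: equivalence class manifold representation — an equivariant model matching the score on a set of representatives matches it everywhere). -/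

import Mathlib

/-!
By the chain rule, invariance of `q` makes the score `∇ log q` itself `(𝒢, ∇⁻¹)`-equivariant.
Writing `x = G m`, both `s` and the score are sent by `(DG(m))*` to the same vector at `m`, and
`(DG(m))*` is injective because `DG(m)` is surjective.
-/

open InnerProductSpace ContinuousLinearMap

section

variable {𝕜 E F : Type*} [RCLike 𝕜] [NormedAddCommGroup E] [NormedAddCommGroup F]
  [InnerProductSpace 𝕜 E] [InnerProductSpace 𝕜 F] [CompleteSpace E] [CompleteSpace F]

theorem ContinuousLinearMap.adjoint_injective_of_surjective {T : E →L[𝕜] F}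
    (hT : Function.Surjective T) : Function.Injective (adjoint T) := by
  have hker : (adjoint T).ker = ⊥ := by
    rw [← orthogonal_range, LinearMap.range_eq_top.mpr hT, Submodule.top_orthogonal_eq_bot]
  exact LinearMap.ker_eq_bot.mp hker

theorem HasGradientAt.comp_hasFDerivAt {f : F → 𝕜} {f' : F} {G : E → F} {G' : E →L[𝕜] F}
    {x : E} (hf : HasGradientAt f f' (G x)) (hG : HasFDerivAt G G' x) :
    HasGradientAt (f ∘ G) (adjoint G' f') x := by
  rw [hasGradientAt_iff_hasFDerivAt] at hf ⊢
  refine (hf.comp x hG).congr_fderiv ?_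
  ext v
  simp [adjoint_inner_left]

theorem gradient_eq_adjoint_fderiv_apply_of_comp_eq {f : F → 𝕜} {G : F → F} {x : F}
    (hfG : f ∘ G = f) (hf : DifferentiableAt 𝕜 f (G x)) (hG : DifferentiableAt 𝕜 G x) :
    gradient f x = adjoint (fderiv 𝕜 G x) (gradient f (G x)) := by
  rw [← (hf.hasGradientAt.comp_hasFDerivAt hG.hasFDerivAt).gradient, hfG]

end

theorem ecm_representation_general {n : ℕ}
    (𝒢 : Set (EuclideanSpace ℝ (Fin n) → EuclideanSpace ℝ (Fin n)))
    (hGdiff : ∀ G ∈ 𝒢, Differentiable ℝ G)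
    (hGinv : ∀ G ∈ 𝒢, ∀ x : EuclideanSpace ℝ (Fin n),
      ∃ e : EuclideanSpace ℝ (Fin n) ≃L[ℝ] EuclideanSpace ℝ (Fin n),
        (e : EuclideanSpace ℝ (Fin n) →L[ℝ] EuclideanSpace ℝ (Fin n)) = fderiv ℝ G x)
    (q : EuclideanSpace ℝ (Fin n) → ℝ)
    (hq_pos : ∀ x, 0 < q x) (hq : Differentiable ℝ q)
    (hqinv : ∀ G ∈ 𝒢, ∀ x, q (G x) = q x)
    (M : Set (EuclideanSpace ℝ (Fin n)))
    (hM : ∀ x : EuclideanSpace ℝ (Fin n), ∃ G ∈ 𝒢, ∃ m ∈ M, G m = x)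
    (s : EuclideanSpace ℝ (Fin n) → EuclideanSpace ℝ (Fin n))
    (hs_equiv : ∀ G ∈ 𝒢, ∀ x,
      (ContinuousLinearMap.adjoint (fderiv ℝ G x)) (s (G x)) = s x)
    (hs_on_M : ∀ m ∈ M, s m = gradient (fun y => Real.log (q y)) m) :
    ∀ x, s x = gradient (fun y => Real.log (q y)) x := by
  intro x
  obtain ⟨G, hG, m, hm, rfl⟩ := hM x
  set f := fun y => Real.log (q y)
  have hf_inv : f ∘ G = f := funext fun y => by simp [f, hqinv G hG y]
  have hf_diff : Differentiable ℝ f := fun y => (hq y).log (hq_pos y).ne'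
  obtain ⟨e, he⟩ := hGinv G hG m
  have hadj_inj : Function.Injective (adjoint (fderiv ℝ G m)) :=
    he ▸ adjoint_injective_of_surjective e.surjective
  apply hadj_inj
  rw [hs_equiv G hG m, hs_on_M m hm,
    gradient_eq_adjoint_fderiv_apply_of_comp_eq hf_inv (hf_diff _) (hGdiff G hG m)]

/-- The paper's Theorem 2 (equivalence class manifold representation): if `q` is a positive,
differentiable, `𝒢`-invariant density, every point of `ℝⁿ` is of the form `G m` with `G ∈ 𝒢`
and `m` in the set of representatives `M`, and `s` is a `(𝒢, ∇⁻¹)`-equivariant model that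
matches the score `∇ log q` on `M`, then `s` matches the score everywhere. -/
theorem ecm_representation {n : ℕ}
    (𝒢 : Set (EuclideanSpace ℝ (Fin n) → EuclideanSpace ℝ (Fin n)))
    (hGdiff : ∀ G ∈ 𝒢, Differentiable ℝ G)
    (hGbij : ∀ G ∈ 𝒢, Function.Bijective G)
    (hGinv : ∀ G ∈ 𝒢, ∀ x : EuclideanSpace ℝ (Fin n),
      ∃ e : EuclideanSpace ℝ (Fin n) ≃L[ℝ] EuclideanSpace ℝ (Fin n),
        (e : EuclideanSpace ℝ (Fin n) →L[ℝ] EuclideanSpace ℝ (Fin n)) = fderiv ℝ G x)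
    (q : EuclideanSpace ℝ (Fin n) → ℝ)
    (hq_pos : ∀ x, 0 < q x) (hq : Differentiable ℝ q)
    (hqinv : ∀ G ∈ 𝒢, ∀ x, q (G x) = q x)
    (M : Set (EuclideanSpace ℝ (Fin n)))
    (hM : ∀ x : EuclideanSpace ℝ (Fin n), ∃ G ∈ 𝒢, ∃ m ∈ M, G m = x)
    (s : EuclideanSpace ℝ (Fin n) → EuclideanSpace ℝ (Fin n))
    (hs_equiv : ∀ G ∈ 𝒢, ∀ x,
      (ContinuousLinearMap.adjoint (fderiv ℝ G x)) (s (G x)) = s x)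
    (hs_on_M : ∀ m ∈ M, s m = gradient (fun y => Real.log (q y)) m) :
    ∀ x, s x = gradient (fun y => Real.log (q y)) x :=
  ecm_representation_general 𝒢 hGdiff hGinv q hq_pos hq hqinv M hM s hs_equiv hs_on_M
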